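/- arXiv:1401.0500 — 8 statements merged into one kernel-verified Lean document; each statement's English description precedes it below -/
import Mathlib

section
/- Let V be a finite-dimensional vector space over a field, let n ≥ 4 be an integer, and let V_1, …, V_n be linear subspaces of V. Then ∑_{i=3}^n dim(V_i) + dim(V_1+V_2) + dim(V_1+V_3+V_n) + ∑_{i=4}^n dim(V_2+V_{i-1}+V_i) ≤ dim(V_1+V_3) + dim(V_1+V_n) + ∑_{i=3}^n dim(V_2+V_i) + ∑_{i=4}^n dim(V_{i-1}+V_i). -/
open Finset Module

section KinserAux

variable {𝔽 : Type*} [Field 𝔽] {W : Type*} [AddCommGroup W]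
    [Module 𝔽 W] [FiniteDimensional 𝔽 W]

/-- rank identity -/
lemma kinser_rk_id (A B : Submodule 𝔽 W) :
    finrank 𝔽 ↥(A ⊔ B) + finrank 𝔽 ↥(A ⊓ B) = finrank 𝔽 A + finrank 𝔽 B :=
  Submodule.finrank_sup_add_finrank_inf_eq A B

/-- conditional rank is monotone decreasing in the condition -/
lemma kinser_hmono (B : Submodule 𝔽 W) {S T : Submodule 𝔽 W} (hST : S ≤ T) :
    finrank 𝔽 ↥(B ⊔ T) + finrank 𝔽 S ≤ finrank 𝔽 ↥(B ⊔ S) + finrank 𝔽 T := by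
  have h1 : finrank 𝔽 ↥((B ⊔ S) ⊔ T) + finrank 𝔽 ↥((B ⊔ S) ⊓ T)
      = finrank 𝔽 ↥(B ⊔ S) + finrank 𝔽 T := kinser_rk_id _ _
  have h2 : (B ⊔ S) ⊔ T = B ⊔ T := by
    rw [sup_assoc, sup_eq_right.2 hST]
  have h3 : S ≤ (B ⊔ S) ⊓ T := le_inf (le_sup_right) hST
  have h4 : finrank 𝔽 S ≤ finrank 𝔽 ↥((B ⊔ S) ⊓ T) := Submodule.finrank_mono h3
  rw [h2] at h1
  omega

/-- pair submodularity conditioned on B -/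
lemma kinser_pair (B X Y : Submodule 𝔽 W) :
    finrank 𝔽 ↥(B ⊔ X ⊔ Y) + finrank 𝔽 ↥(B ⊔ (X ⊓ Y))
      ≤ finrank 𝔽 ↥(B ⊔ X) + finrank 𝔽 ↥(B ⊔ Y) := by
  have h1 : finrank 𝔽 ↥((B ⊔ X) ⊔ (B ⊔ Y)) + finrank 𝔽 ↥((B ⊔ X) ⊓ (B ⊔ Y))
      = finrank 𝔽 ↥(B ⊔ X) + finrank 𝔽 ↥(B ⊔ Y) := kinser_rk_id _ _
  have h2 : (B ⊔ X) ⊔ (B ⊔ Y) = B ⊔ X ⊔ Y := by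
    rw [sup_sup_sup_comm, sup_idem, ← sup_assoc]
  have h3 : B ⊔ (X ⊓ Y) ≤ (B ⊔ X) ⊓ (B ⊔ Y) :=
    le_inf (sup_le_sup_left inf_le_left B) (sup_le_sup_left inf_le_right B)
  have h4 := Submodule.finrank_mono h3
  rw [h2] at h1
  omega

end KinserAux

/-- The `n`-th Kinser inequality for an arrangement of `n` subspaces
`V 1, …, V n` of a finite-dimensional vector space. -/
theorem kinser_inequality_subspaces {𝔽 : Type*} [Field 𝔽] {W : Type*} [AddCommGroup W]
    [Module 𝔽 W] [FiniteDimensional 𝔽 W] {n : ℕ} (hn : 4 ≤ n) (V : ℕ → Submodule 𝔽 W) :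
    (∑ i ∈ Finset.Icc 3 n, finrank 𝔽 (V i)) + finrank 𝔽 ↥(V 1 ⊔ V 2)
        + finrank 𝔽 ↥(V 1 ⊔ V 3 ⊔ V n)
        + ∑ i ∈ Finset.Icc 4 n, finrank 𝔽 ↥(V 2 ⊔ V (i - 1) ⊔ V i)
      ≤ finrank 𝔽 ↥(V 1 ⊔ V 3) + finrank 𝔽 ↥(V 1 ⊔ V n)
        + (∑ i ∈ Finset.Icc 3 n, finrank 𝔽 ↥(V 2 ⊔ V i))
        + ∑ i ∈ Finset.Icc 4 n, finrank 𝔽 ↥(V (i - 1) ⊔ V i) := by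
  -- Z k : intersection of V 3, ..., V k
  have key : ∀ k, 3 ≤ k →
      finrank 𝔽 ↥(V 2 ⊔ (Finset.Icc 3 k).inf V) + (∑ i ∈ Finset.Icc 3 k, finrank 𝔽 (V i))
        + ∑ i ∈ Finset.Icc 4 k, finrank 𝔽 ↥(V 2 ⊔ V (i - 1) ⊔ V i)
      ≤ (∑ i ∈ Finset.Icc 3 k, finrank 𝔽 ↥(V 2 ⊔ V i))
        + ∑ i ∈ Finset.Icc 4 k, finrank 𝔽 ↥(V (i - 1) ⊔ V i)
        + finrank 𝔽 ↥((Finset.Icc 3 k).inf V) := by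
    intro k hk
    induction k, hk using Nat.le_induction with
    | base =>
        have h1 : (Finset.Icc 3 3).inf V = V 3 := by
          rw [Finset.Icc_self, Finset.inf_singleton]
        rw [h1, Finset.Icc_self, Finset.sum_singleton, Finset.sum_singleton,
          Finset.Icc_eq_empty (show ¬(4:ℕ) ≤ 3 by omega), Finset.sum_empty, Finset.sum_empty]
        omega
    | succ k hk ih =>
        have h34 : (3:ℕ) ≤ k + 1 := by omega
        set Zk : Submodule 𝔽 W := (Finset.Icc 3 k).inf V with hZk
        have hZsucc : (Finset.Icc 3 (k+1)).inf V = Zk ⊓ V (k + 1) := by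
          rw [← Finset.insert_Icc_right_eq_Icc_add_one h34, Finset.inf_insert, inf_comm]
        -- expand the sums
        rw [hZsucc, ← Finset.insert_Icc_right_eq_Icc_add_one h34,
          ← Finset.insert_Icc_right_eq_Icc_add_one (by omega : (4:ℕ) ≤ k + 1),
          Finset.sum_insert (by simp), Finset.sum_insert (by simp),
          Finset.sum_insert (by simp), Finset.sum_insert (by simp)]
        have step1 : finrank 𝔽 ↥(V 2 ⊔ Zk ⊔ V (k+1)) + finrank 𝔽 ↥(V 2 ⊔ (Zk ⊓ V (k+1)))
            ≤ finrank 𝔽 ↥(V 2 ⊔ Zk) + finrank 𝔽 ↥(V 2 ⊔ V (k+1)) := kinser_pair _ _ _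
        have hle : Zk ⊔ V (k+1) ≤ V k ⊔ V (k+1) := by
          apply sup_le_sup_right
          exact Finset.inf_le (by simp [Finset.mem_Icc]; omega)
        have step2 : finrank 𝔽 ↥(V 2 ⊔ (V k ⊔ V (k+1))) + finrank 𝔽 ↥(Zk ⊔ V (k+1))
            ≤ finrank 𝔽 ↥(V 2 ⊔ (Zk ⊔ V (k+1))) + finrank 𝔽 ↥(V k ⊔ V (k+1)) :=
          kinser_hmono _ hle
        have step3 : finrank 𝔽 ↥(Zk ⊔ V (k+1)) + finrank 𝔽 ↥(Zk ⊓ V (k+1))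
            = finrank 𝔽 Zk + finrank 𝔽 (V (k+1)) := kinser_rk_id _ _
        have e1 : V 2 ⊔ Zk ⊔ V (k+1) = V 2 ⊔ (Zk ⊔ V (k+1)) := sup_assoc ..
        have e2 : V 2 ⊔ V k ⊔ V (k+1) = V 2 ⊔ (V k ⊔ V (k+1)) := sup_assoc ..
        have e3 : (k + 1 - 1) = k := by omega
        rw [e1] at step1
        rw [e3, e2]
        omega
  have keyn := key n (by omega)
  set Zn : Submodule 𝔽 W := (Finset.Icc 3 n).inf V with hZn
  -- common information Zs = (V1 ⊔ V3) ⊓ (V1 ⊔ Vn)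
  set Zs : Submodule 𝔽 W := (V 1 ⊔ V 3) ⊓ (V 1 ⊔ V n) with hZs
  have fact3 : finrank 𝔽 ↥(V 1 ⊔ V 3 ⊔ V n) + finrank 𝔽 Zs
      = finrank 𝔽 ↥(V 1 ⊔ V 3) + finrank 𝔽 ↥(V 1 ⊔ V n) := by
    have h1 := kinser_rk_id (V 1 ⊔ V 3) (V 1 ⊔ V n)
    have h2 : (V 1 ⊔ V 3) ⊔ (V 1 ⊔ V n) = V 1 ⊔ V 3 ⊔ V n := by
      rw [sup_sup_sup_comm, sup_idem, ← sup_assoc]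
    rw [h2] at h1
    exact h1
  have hZnZs : Zn ≤ Zs := by
    refine le_inf ?_ ?_
    · exact le_trans (Finset.inf_le (by simp [Finset.mem_Icc]; omega)) le_sup_right
    · exact le_trans (Finset.inf_le (by simp [Finset.mem_Icc]; omega)) le_sup_right
  have fact2a : finrank 𝔽 ↥(V 2 ⊔ Zs) + finrank 𝔽 Zn
      ≤ finrank 𝔽 ↥(V 2 ⊔ Zn) + finrank 𝔽 Zs := kinser_hmono _ hZnZs
  have fact2b : finrank 𝔽 ↥(V 1 ⊔ V 2) ≤ finrank 𝔽 ↥(V 2 ⊔ Zs) := by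
    apply Submodule.finrank_mono
    rw [sup_comm (V 2) Zs]
    exact sup_le_sup_right (le_inf le_sup_left le_sup_left) _
  omega
end

section
/- Let V be a finite-dimensional vector space over a field, and let V_1, V_2, V_3, V_4 be linear subspaces of V. Then dim(V_3) + dim(V_4) + dim(V_1+V_2) + dim(V_1+V_3+V_4) + dim(V_2+V_3+V_4) ≤ dim(V_1+V_3) + dim(V_1+V_4) + dim(V_2+V_3) + dim(V_2+V_4) + dim(V_3+V_4). -/
open Finset Module

/-- The Ingleton inequality for four subspaces of a finite-dimensional vector space. -/
theorem ingleton_inequality_subspaces {𝔽 : Type*} [Field 𝔽] {W : Type*} [AddCommGroup W]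
    [Module 𝔽 W] [FiniteDimensional 𝔽 W] (V₁ V₂ V₃ V₄ : Submodule 𝔽 W) :
    finrank 𝔽 V₃ + finrank 𝔽 V₄ + finrank 𝔽 ↥(V₁ ⊔ V₂) + finrank 𝔽 ↥(V₁ ⊔ V₃ ⊔ V₄)
        + finrank 𝔽 ↥(V₂ ⊔ V₃ ⊔ V₄)
      ≤ finrank 𝔽 ↥(V₁ ⊔ V₃) + finrank 𝔽 ↥(V₁ ⊔ V₄) + finrank 𝔽 ↥(V₂ ⊔ V₃)
        + finrank 𝔽 ↥(V₂ ⊔ V₄) + finrank 𝔽 ↥(V₃ ⊔ V₄) := by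
  set Z := V₃ ⊓ V₄ with hZ
  have h34 : finrank 𝔽 ↥(V₃ ⊔ V₄) + finrank 𝔽 ↥Z = finrank 𝔽 V₃ + finrank 𝔽 V₄ :=
    Submodule.finrank_sup_add_finrank_inf_eq V₃ V₄
  have e1 : (V₁ ⊔ V₃) ⊔ (V₁ ⊔ V₄) = V₁ ⊔ V₃ ⊔ V₄ := by
    rw [sup_sup_sup_comm, sup_idem, sup_assoc]
  have e2 : (V₂ ⊔ V₃) ⊔ (V₂ ⊔ V₄) = V₂ ⊔ V₃ ⊔ V₄ := by
    rw [sup_sup_sup_comm, sup_idem, sup_assoc]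
  have h1 : finrank 𝔽 ↥(V₁ ⊔ V₃ ⊔ V₄) + finrank 𝔽 ↥((V₁ ⊔ V₃) ⊓ (V₁ ⊔ V₄))
      = finrank 𝔽 ↥(V₁ ⊔ V₃) + finrank 𝔽 ↥(V₁ ⊔ V₄) := by
    rw [← e1]; exact Submodule.finrank_sup_add_finrank_inf_eq _ _
  have h2 : finrank 𝔽 ↥(V₂ ⊔ V₃ ⊔ V₄) + finrank 𝔽 ↥((V₂ ⊔ V₃) ⊓ (V₂ ⊔ V₄))
      = finrank 𝔽 ↥(V₂ ⊔ V₃) + finrank 𝔽 ↥(V₂ ⊔ V₄) := by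
    rw [← e2]; exact Submodule.finrank_sup_add_finrank_inf_eq _ _
  have m1 : finrank 𝔽 ↥(V₁ ⊔ Z) ≤ finrank 𝔽 ↥((V₁ ⊔ V₃) ⊓ (V₁ ⊔ V₄)) :=
    Submodule.finrank_mono (sup_le (le_inf le_sup_left le_sup_left)
      (le_inf (inf_le_left.trans le_sup_right) (inf_le_right.trans le_sup_right)))
  have m2 : finrank 𝔽 ↥(V₂ ⊔ Z) ≤ finrank 𝔽 ↥((V₂ ⊔ V₃) ⊓ (V₂ ⊔ V₄)) :=
    Submodule.finrank_mono (sup_le (le_inf le_sup_left le_sup_left)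
      (le_inf (inf_le_left.trans le_sup_right) (inf_le_right.trans le_sup_right)))
  have h12 : finrank 𝔽 ↥((V₁ ⊔ Z) ⊔ (V₂ ⊔ Z)) + finrank 𝔽 ↥((V₁ ⊔ Z) ⊓ (V₂ ⊔ Z))
      = finrank 𝔽 ↥(V₁ ⊔ Z) + finrank 𝔽 ↥(V₂ ⊔ Z) :=
    Submodule.finrank_sup_add_finrank_inf_eq _ _
  have m3 : finrank 𝔽 ↥(V₁ ⊔ V₂) ≤ finrank 𝔽 ↥((V₁ ⊔ Z) ⊔ (V₂ ⊔ Z)) :=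
    Submodule.finrank_mono (sup_le (le_sup_left.trans le_sup_left)
      (le_sup_left.trans le_sup_right))
  have m4 : finrank 𝔽 ↥Z ≤ finrank 𝔽 ↥((V₁ ⊔ Z) ⊓ (V₂ ⊔ Z)) :=
    Submodule.finrank_mono (le_inf le_sup_right le_sup_right)
  omega
end

section
/- Let M be a finite matroid that is representable over some field, let n ≥ 4 be an integer, and let X_1, …, X_n be any subsets of the ground set E(M). Then M satisfies the n-th Kinser inequality for X_1, …, X_n, that is: ∑_{i=3}^n r(X_i) + r(X_1∪X_2) + r(X_1∪X_3∪X_n) + ∑_{i=4}^n r(X_2∪X_{i-1}∪X_i) ≤ r(X_1∪X_3) + r(X_1∪X_n) + ∑_{i=3}^n r(X_2∪X_i) + ∑_{i=4}^n r(X_{i-1}∪X_i). -/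
open Finset

universe u v

namespace Matroid

variable {α : Type*}

/-- The rank of a set in a matroid: the cardinality of a largest independent subset. -/
noncomputable def rnk (M : Matroid α) (X : Set α) : ℕ :=
  sSup {n : ℕ | ∃ I, M.Indep I ∧ I ⊆ X ∧ I.ncard = n}

/-- The `n`-th Kinser inequality for the family `X 1, …, X n`. -/
def KinserIneq (M : Matroid α) (n : ℕ) (X : ℕ → Set α) : Prop :=
  (∑ i ∈ Finset.Icc 3 n, M.rnk (X i)) + M.rnk (X 1 ∪ X 2) + M.rnk (X 1 ∪ X 3 ∪ X n)
      + ∑ i ∈ Finset.Icc 4 n, M.rnk (X 2 ∪ X (i - 1) ∪ X i)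
    ≤ M.rnk (X 1 ∪ X 3) + M.rnk (X 1 ∪ X n)
      + (∑ i ∈ Finset.Icc 3 n, M.rnk (X 2 ∪ X i))
      + ∑ i ∈ Finset.Icc 4 n, M.rnk (X (i - 1) ∪ X i)

/-- `M` lies in the Kinser class `K n`: the `n`-th Kinser inequality holds for every
family of `n` subsets of the ground set. -/
def MemKinserClass (M : Matroid α) (n : ℕ) : Prop :=
  ∀ X : ℕ → Set α, (∀ i ∈ Finset.Icc 1 n, X i ⊆ M.E) → M.KinserIneq n X

/-- `M` is (isomorphic to) the matroid of linear dependence of a family of vectors of a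
vector space over `𝔽`. -/
def IsRepOver {α : Type u} (M : Matroid α) (𝔽 : Type v) [Field 𝔽] : Prop :=
  ∃ (W : Type (max u v)) (_ : AddCommGroup W) (_ : Module 𝔽 W) (φ : α → W),
    ∀ I : Set α, M.Indep I ↔ I ⊆ M.E ∧ LinearIndependent 𝔽 (fun x : I => φ x.1)

/-- Deletion of a set of elements from a matroid. -/
def del (M : Matroid α) (D : Set α) : Matroid α := M ↾ (M.E \ D)

/-- Contraction of a set of elements in a matroid. -/
def con (M : Matroid α) (C : Set α) : Matroid α := (M✶ ↾ (M✶.E \ C))✶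

/-- `N` is a minor of `M`: it is obtained from `M` by contractions and deletions. -/
def IsMinorOf (N M : Matroid α) : Prop :=
  ∃ C D : Set α, C ⊆ M.E ∧ D ⊆ M.E ∧ Disjoint C D ∧ N = (M.con C).del D

/-- `N` is a proper minor of `M`: at least one element is deleted or contracted. -/
def IsProperMinorOf (N M : Matroid α) : Prop :=
  ∃ C D : Set α, C ⊆ M.E ∧ D ⊆ M.E ∧ Disjoint C D ∧ (C ∪ D).Nonempty ∧
    N = (M.con C).del D

/-- A matroid isomorphism: a bijection of ground sets preserving independence. -/
def IsIsoTo {β : Type*} (M : Matroid α) (N : Matroid β) : Prop :=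
  ∃ f : α → β, Set.BijOn f M.E N.E ∧ ∀ I ⊆ M.E, (M.Indep I ↔ N.Indep (f '' I))

/-- The Ingleton inequality (the 4th Kinser inequality) for four subsets. -/
def IngletonIneq (M : Matroid α) (X₁ X₂ X₃ X₄ : Set α) : Prop :=
  M.rnk X₃ + M.rnk X₄ + M.rnk (X₁ ∪ X₂) + M.rnk (X₁ ∪ X₃ ∪ X₄) + M.rnk (X₂ ∪ X₃ ∪ X₄)
    ≤ M.rnk (X₁ ∪ X₃) + M.rnk (X₁ ∪ X₄) + M.rnk (X₂ ∪ X₃) + M.rnk (X₂ ∪ X₄)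
      + M.rnk (X₃ ∪ X₄)

end Matroid

/-!
For subspaces of a finite-dimensional space, two facts suffice: the modular law
`dim Q + dim R = dim (Q + R) + dim (Q ∩ R)` and submodularity of `dim`. Ingleton's inequality
for `A, B, C, D` follows by using `C ∩ D` as the common information of `C` and `D`, and the
Kinser inequality for `V₁, …, Vₙ₊₁` follows from the one for `V₁, …, Vₙ₋₁, Vₙ ∩ Vₙ₊₁`.
A representation `φ` of `M` turns `r(S)` into the dimension of the span of `φ(S ∩ E)`, and unions
into sums of subspaces, so the matroid statement is the subspace statement for these spans.
-/

namespace Submodule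

open Module

variable {𝔽 W : Type*} [Field 𝔽] [AddCommGroup W] [Module 𝔽 W] [FiniteDimensional 𝔽 W]

theorem finrank_add_finrank_le_of_le_sup_of_le_inf {P Q R S : Submodule 𝔽 W}
    (hR : R ≤ P ⊔ Q) (hS : S ≤ P ⊓ Q) :
    finrank 𝔽 R + finrank 𝔽 S ≤ finrank 𝔽 P + finrank 𝔽 Q := by
  have := finrank_mono hR
  have := finrank_mono hS
  have := finrank_sup_add_finrank_inf_eq P Q
  omega

theorem finrank_ingleton (A B C D : Submodule 𝔽 W) :
    finrank 𝔽 C + finrank 𝔽 D + finrank 𝔽 ↥(A ⊔ B) + finrank 𝔽 ↥(A ⊔ C ⊔ D)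
      + finrank 𝔽 ↥(B ⊔ C ⊔ D)
    ≤ finrank 𝔽 ↥(A ⊔ C) + finrank 𝔽 ↥(A ⊔ D) + finrank 𝔽 ↥(B ⊔ C) + finrank 𝔽 ↥(B ⊔ D)
      + finrank 𝔽 ↥(C ⊔ D) := by
  have hCD := finrank_sup_add_finrank_inf_eq C D
  have hA : finrank 𝔽 ↥(A ⊔ C ⊔ D) + finrank 𝔽 ↥(A ⊔ C ⊓ D)
      ≤ finrank 𝔽 ↥(A ⊔ C) + finrank 𝔽 ↥(A ⊔ D) :=
    finrank_add_finrank_le_of_le_sup_of_le_inf (by order) (by order)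
  have hB : finrank 𝔽 ↥(B ⊔ C ⊔ D) + finrank 𝔽 ↥(B ⊔ C ⊓ D)
      ≤ finrank 𝔽 ↥(B ⊔ C) + finrank 𝔽 ↥(B ⊔ D) :=
    finrank_add_finrank_le_of_le_sup_of_le_inf (by order) (by order)
  have hAB : finrank 𝔽 ↥(A ⊔ B) + finrank 𝔽 ↥(C ⊓ D)
      ≤ finrank 𝔽 ↥(A ⊔ C ⊓ D) + finrank 𝔽 ↥(B ⊔ C ⊓ D) :=
    finrank_add_finrank_le_of_le_sup_of_le_inf (by order) (by order)
  omega

/-- The Kinser inequality for `A, B, C, …, P, Q, R` minus the one for `A, B, C, …, P, Q ⊓ R`. -/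
theorem finrank_kinser_step (A B C P Q R : Submodule 𝔽 W) :
    finrank 𝔽 Q + finrank 𝔽 R + finrank 𝔽 ↥(A ⊔ C ⊔ R) + finrank 𝔽 ↥(B ⊔ P ⊔ Q)
      + finrank 𝔽 ↥(B ⊔ Q ⊔ R) + finrank 𝔽 ↥(A ⊔ Q ⊓ R) + finrank 𝔽 ↥(B ⊔ Q ⊓ R)
      + finrank 𝔽 ↥(P ⊔ Q ⊓ R)
    ≤ finrank 𝔽 ↥(Q ⊓ R) + finrank 𝔽 ↥(A ⊔ C ⊔ Q ⊓ R) + finrank 𝔽 ↥(B ⊔ P ⊔ Q ⊓ R)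
      + finrank 𝔽 ↥(A ⊔ R) + finrank 𝔽 ↥(B ⊔ Q) + finrank 𝔽 ↥(B ⊔ R) + finrank 𝔽 ↥(P ⊔ Q)
      + finrank 𝔽 ↥(Q ⊔ R) := by
  have hQR := finrank_sup_add_finrank_inf_eq Q R
  have hA : finrank 𝔽 ↥(A ⊔ C ⊔ R) + finrank 𝔽 ↥(A ⊔ Q ⊓ R)
      ≤ finrank 𝔽 ↥(A ⊔ R) + finrank 𝔽 ↥(A ⊔ C ⊔ Q ⊓ R) :=
    finrank_add_finrank_le_of_le_sup_of_le_inf (by order) (by order)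
  have hB : finrank 𝔽 ↥(B ⊔ Q ⊔ R) + finrank 𝔽 ↥(B ⊔ Q ⊓ R)
      ≤ finrank 𝔽 ↥(B ⊔ Q) + finrank 𝔽 ↥(B ⊔ R) :=
    finrank_add_finrank_le_of_le_sup_of_le_inf (by order) (by order)
  have hP : finrank 𝔽 ↥(B ⊔ P ⊔ Q) + finrank 𝔽 ↥(P ⊔ Q ⊓ R)
      ≤ finrank 𝔽 ↥(P ⊔ Q) + finrank 𝔽 ↥(B ⊔ P ⊔ Q ⊓ R) :=
    finrank_add_finrank_le_of_le_sup_of_le_inf (by order) (by order)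
  omega

/-- The Kinser inequality for the family `V 1, …, V m, T`. Keeping the last member apart lets
the induction replace it by `V (m + 1) ⊓ T`. -/
theorem finrank_kinser_snoc {m : ℕ} (hm : 3 ≤ m) (V : ℕ → Submodule 𝔽 W)
    (T : Submodule 𝔽 W) :
    (∑ i ∈ Icc 3 m, finrank 𝔽 (V i)) + finrank 𝔽 T + finrank 𝔽 ↥(V 1 ⊔ V 2)
      + finrank 𝔽 ↥(V 1 ⊔ V 3 ⊔ T) + (∑ i ∈ Icc 4 m, finrank 𝔽 ↥(V 2 ⊔ V (i - 1) ⊔ V i))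
      + finrank 𝔽 ↥(V 2 ⊔ V m ⊔ T)
    ≤ finrank 𝔽 ↥(V 1 ⊔ V 3) + finrank 𝔽 ↥(V 1 ⊔ T)
      + (∑ i ∈ Icc 3 m, finrank 𝔽 ↥(V 2 ⊔ V i)) + finrank 𝔽 ↥(V 2 ⊔ T)
      + (∑ i ∈ Icc 4 m, finrank 𝔽 ↥(V (i - 1) ⊔ V i)) + finrank 𝔽 ↥(V m ⊔ T) := by
  induction m, hm using Nat.le_induction generalizing T with
  | base =>
    simp only [Icc_self, sum_singleton, Icc_eq_empty_of_lt (by norm_num : 3 < 4), sum_empty]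
    have := finrank_ingleton (V 1) (V 2) (V 3) T
    omega
  | succ m hm ih =>
    simp only [sum_Icc_succ_top (by omega : 3 ≤ m + 1), sum_Icc_succ_top (by omega : 4 ≤ m + 1),
      Nat.add_one_sub_one]
    have := ih (V (m + 1) ⊓ T)
    have := finrank_kinser_step (V 1) (V 2) (V 3) (V m) (V (m + 1)) T
    omega

theorem finrank_kinser {n : ℕ} (hn : 4 ≤ n) (V : ℕ → Submodule 𝔽 W) :
    (∑ i ∈ Icc 3 n, finrank 𝔽 (V i)) + finrank 𝔽 ↥(V 1 ⊔ V 2) + finrank 𝔽 ↥(V 1 ⊔ V 3 ⊔ V n)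
      + ∑ i ∈ Icc 4 n, finrank 𝔽 ↥(V 2 ⊔ V (i - 1) ⊔ V i)
    ≤ finrank 𝔽 ↥(V 1 ⊔ V 3) + finrank 𝔽 ↥(V 1 ⊔ V n)
      + (∑ i ∈ Icc 3 n, finrank 𝔽 ↥(V 2 ⊔ V i))
      + ∑ i ∈ Icc 4 n, finrank 𝔽 ↥(V (i - 1) ⊔ V i) := by
  obtain ⟨m, rfl⟩ : ∃ m, n = m + 1 := ⟨n - 1, by omega⟩
  simp only [sum_Icc_succ_top (by omega : 3 ≤ m + 1), sum_Icc_succ_top (by omega : 4 ≤ m + 1),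
    Nat.add_one_sub_one]
  have := finrank_kinser_snoc (by omega : 3 ≤ m) V (V (m + 1))
  omega

end Submodule

theorem LinearIndepOn.finrank_span_image {𝔽 W ι : Type*} [Field 𝔽] [AddCommGroup W]
    [Module 𝔽 W] {φ : ι → W} {I : Set ι} (hI : LinearIndepOn 𝔽 φ I) :
    Module.finrank 𝔽 (Submodule.span 𝔽 (φ '' I)) = I.ncard := by
  rw [Set.ncard_def, ← toENat_rank_span_set hI, Module.finrank]
  simp

namespace Matroid

open Submodule Module

def IsRep {α W : Type*} [AddCommGroup W] (M : Matroid α) (𝔽 : Type*) [Field 𝔽] [Module 𝔽 W]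
    (φ : α → W) : Prop :=
  ∀ I : Set α, M.Indep I ↔ I ⊆ M.E ∧ LinearIndepOn 𝔽 φ I

variable {α 𝔽 W : Type*} [Field 𝔽] [AddCommGroup W] [Module 𝔽 W] {M : Matroid α} {φ : α → W}

theorem IsRep.exists_isRep_span (hφ : M.IsRep 𝔽 φ) :
    ∃ ψ : α → span 𝔽 (φ '' M.E), M.IsRep 𝔽 ψ := by
  classical
  refine ⟨fun x ↦ if hx : x ∈ M.E then ⟨φ x, subset_span (Set.mem_image_of_mem φ hx)⟩ else 0,
    fun I ↦ (hφ I).trans (and_congr_right fun hIE ↦ ?_)⟩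
  rw [← (span 𝔽 (φ '' M.E)).subtype.linearIndepOn_iff_of_injOn
    (injective_subtype _).injOn]
  exact linearIndepOn_congr fun x hx ↦ by simp [hIE hx]

theorem IsRep.rnk_eq_finrank_span [FiniteDimensional 𝔽 W] (hφ : M.IsRep 𝔽 φ) (S : Set α) :
    M.rnk S = finrank 𝔽 (span 𝔽 (φ '' (S ∩ M.E))) := by
  refine IsGreatest.csSup_eq ⟨?_, ?_⟩
  · obtain ⟨B, hBS, -, hspan, hB⟩ :=
      exists_linearIndepOn_extension (linearIndepOn_empty 𝔽 φ) (Set.empty_subset (S ∩ M.E))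
    refine ⟨B, (hφ B).2 ⟨hBS.trans Set.inter_subset_right, hB⟩,
      hBS.trans Set.inter_subset_left, ?_⟩
    rw [← hB.finrank_span_image, le_antisymm (span_mono (Set.image_mono hBS)) (span_le.2 hspan)]
  · rintro _ ⟨I, hI, hIS, rfl⟩
    obtain ⟨hIE, hI⟩ := (hφ I).1 hI
    rw [← hI.finrank_span_image]
    exact finrank_mono (span_mono (Set.image_mono (Set.subset_inter hIS hIE)))

theorem IsRep.rnk_union [FiniteDimensional 𝔽 W] (hφ : M.IsRep 𝔽 φ) (S T : Set α) :
    M.rnk (S ∪ T) = finrank 𝔽 ↥(span 𝔽 (φ '' (S ∩ M.E)) ⊔ span 𝔽 (φ '' (T ∩ M.E))) := by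
  rw [hφ.rnk_eq_finrank_span, Set.union_inter_distrib_right, Set.image_union, span_union]

theorem IsRep.rnk_union_union [FiniteDimensional 𝔽 W] (hφ : M.IsRep 𝔽 φ) (S T U : Set α) :
    M.rnk (S ∪ T ∪ U) = finrank 𝔽 ↥(span 𝔽 (φ '' (S ∩ M.E)) ⊔ span 𝔽 (φ '' (T ∩ M.E))
      ⊔ span 𝔽 (φ '' (U ∩ M.E))) := by
  rw [hφ.rnk_eq_finrank_span, Set.union_inter_distrib_right, Set.union_inter_distrib_right,
    Set.image_union, Set.image_union, span_union, span_union]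

end Matroid

theorem Matroid.isRepOver_kinserIneq_general {α : Type u} (M : Matroid α) [M.Finite]
    (hrep : ∃ (𝔽 : Type v) (_ : Field 𝔽), M.IsRepOver 𝔽) {n : ℕ} (hn : 4 ≤ n)
    (X : ℕ → Set α) :
    M.KinserIneq n X := by
  obtain ⟨𝔽, _, W, _, _, φ, hφ⟩ := hrep
  obtain ⟨ψ, hψ⟩ := IsRep.exists_isRep_span (𝔽 := 𝔽) (φ := φ) hφ
  have : FiniteDimensional 𝔽 (Submodule.span 𝔽 (φ '' M.E)) :=
    FiniteDimensional.span_of_finite 𝔽 (M.ground_finite.image φ)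
  simp only [KinserIneq, hψ.rnk_union_union, hψ.rnk_union, hψ.rnk_eq_finrank_span]
  exact Submodule.finrank_kinser hn _

/-- A finite matroid representable over some field satisfies the `n`-th Kinser inequality
for every family of `n` subsets of its ground set. -/
theorem Matroid.isRepOver_kinserIneq {α : Type u} (M : Matroid α) [M.Finite]
    (hrep : ∃ (𝔽 : Type v) (_ : Field 𝔽), M.IsRepOver 𝔽) {n : ℕ} (hn : 4 ≤ n)
    (X : ℕ → Set α) (hX : ∀ i ∈ Finset.Icc 1 n, X i ⊆ M.E) :
    M.KinserIneq n X :=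
  Matroid.isRepOver_kinserIneq_general M hrep hn X
end

section
/- Let n ≥ 4 be an integer, let M be a finite matroid satisfying the n-th Kinser inequality for every family of n subsets of its ground set, and let N be a minor of M. Then N satisfies the n-th Kinser inequality for every family of n subsets of its ground set. In other words, the Kinser class K_n is minor-closed. -/
open Finset

universe u v

/-!
Contracting `C` shifts every rank by the constant `r(C)`: for `Z` disjoint from `C`,
`r_{M/C}(Z) = r_M(Z ∪ C) - r_M(C)`, and deletion does not change ranks at all. Applying the
Kinser inequality of `M` to the family `X i ∪ C` therefore gives the inequality for the minor,
since both sides of the Kinser inequality consist of the same number, `2n - 3`, of rank terms.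
-/

namespace Matroid

variable {α : Type*} {M N : Matroid α} {C D I X Z : Set α}

lemma rnk_eq_ncard_of_isBasis' (hI : M.IsBasis' I X) (hIfin : I.Finite) : M.rnk X = I.ncard := by
  refine IsGreatest.csSup_eq ⟨⟨I, hI.indep, hI.subset, rfl⟩, ?_⟩
  rintro _ ⟨J, hJ, hJX, rfl⟩
  obtain ⟨J', hJ', hJJ'⟩ := hJ.subset_isBasis'_of_subset hJX
  have hcard : J'.encard = I.encard := hJ'.encard_eq_encard hI
  have hJ'fin : J'.Finite := Set.finite_of_encard_eq_coe (hcard.trans hIfin.cast_ncard_eq.symm)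
  rw [Set.ncard_def I, ← hcard, ← Set.ncard_def]
  exact Set.ncard_le_ncard hJJ' hJ'fin

lemma rnk_restrict_of_subset {R : Set α} (hZR : Z ⊆ R) : (M ↾ R).rnk Z = M.rnk Z := by
  unfold rnk
  congr 1
  ext n
  refine exists_congr fun I => and_congr_left fun hI => ?_
  rw [restrict_indep_iff, and_iff_left (hI.1.trans hZR)]

lemma rnk_contract_add_rnk [M.RankFinite] (hZC : Disjoint Z C) :
    (M ／ C).rnk Z + M.rnk C = M.rnk (Z ∪ C) := by
  obtain ⟨J, hJ⟩ := M.exists_isBasis' C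
  obtain ⟨K, hK, hJK⟩ := hJ.indep.subset_isBasis'_of_subset
    (hJ.subset.trans Set.subset_union_right)
  have hKC : K ∩ C = J :=
    (hJ.eq_of_subset_indep (hK.indep.subset Set.inter_subset_left)
      (Set.subset_inter hJK hJ.subset) Set.inter_subset_right).symm
  have hcon : (M ／ C).IsBasis' (K \ C) Z := by
    have h := hK.contract_isBasis' hJ
      (hK.indep.subset (Set.union_subset Set.sdiff_subset hJK))
    rwa [Set.union_sdiff_right, hZC.sdiff_eq_left] at h
  have hKfin : K.Finite := hK.indep.finite
  rw [rnk_eq_ncard_of_isBasis' hcon hKfin.sdiff,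
    rnk_eq_ncard_of_isBasis' hJ (hKC ▸ hKfin.inter_of_left C), rnk_eq_ncard_of_isBasis' hK hKfin,
    ← hKC, add_comm]
  exact Set.ncard_inter_add_ncard_sdiff_eq_ncard K C hKfin

lemma rnk_union_eq_rnk_minor_add [M.RankFinite] (hZ : Z ⊆ ((M.con C).del D).E) :
    M.rnk (Z ∪ C) = ((M.con C).del D).rnk Z + M.rnk C := by
  rw [del, rnk_restrict_of_subset (show Z ⊆ (M.con C).E \ D from hZ), ← rnk_contract_add_rnk]
  · rfl
  exact Set.disjoint_of_subset_left (hZ.trans Set.sdiff_subset) Set.disjoint_sdiff_left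

lemma sum_rnk_union_eq (hrnk : ∀ Z ⊆ N.E, M.rnk (Z ∪ C) = N.rnk Z + M.rnk C)
    {s : Finset ℕ} {Y : ℕ → Set α} (hY : ∀ i ∈ s, Y i ⊆ N.E) :
    ∑ i ∈ s, M.rnk (Y i ∪ C) = ∑ i ∈ s, N.rnk (Y i) + s.card * M.rnk C := by
  rw [sum_congr rfl fun i hi => hrnk _ (hY i hi), sum_add_distrib, sum_const, smul_eq_mul]

lemma KinserIneq.of_union {n : ℕ} (hn : 3 ≤ n) {X : ℕ → Set α}
    (hX : ∀ i ∈ Icc 1 n, X i ⊆ N.E)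
    (hrnk : ∀ Z ⊆ N.E, M.rnk (Z ∪ C) = N.rnk Z + M.rnk C)
    (h : M.KinserIneq n fun i => X i ∪ C) : N.KinserIneq n X := by
  have hX' : ∀ i, 1 ≤ i → i ≤ n → X i ⊆ N.E := fun i h₁ h₂ => hX i (mem_Icc.2 ⟨h₁, h₂⟩)
  have hX₁ := hX' 1 le_rfl (by omega)
  have hX₂ := hX' 2 (by omega) (by omega)
  have hX₃ := hX' 3 (by omega) hn
  have hXₙ := hX' n (by omega) le_rfl
  have hXi : ∀ i ∈ Icc 3 n, X i ⊆ N.E := fun i hi => hX' i (by grind) (by grind)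
  have hXpred : ∀ i ∈ Icc 4 n, X (i - 1) ∪ X i ⊆ N.E := fun i hi =>
    Set.union_subset (hX' _ (by grind) (by grind)) (hX' i (by grind) (by grind))
  unfold KinserIneq at h ⊢
  simp only [← Set.union_union_distrib_right] at h
  rw [sum_rnk_union_eq hrnk hXi,
    sum_rnk_union_eq (Y := fun i => X 2 ∪ X i) hrnk fun i hi =>
      Set.union_subset hX₂ (hXi i hi),
    sum_rnk_union_eq (Y := fun i => X 2 ∪ X (i - 1) ∪ X i) hrnk fun i hi => by
      simpa only [Set.union_assoc] using Set.union_subset hX₂ (hXpred i hi),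
    sum_rnk_union_eq (Y := fun i => X (i - 1) ∪ X i) hrnk hXpred,
    hrnk _ (Set.union_subset hX₁ hX₂), hrnk _ (Set.union_subset hX₁ hX₃),
    hrnk _ (Set.union_subset hX₁ hXₙ),
    hrnk _ (Set.union_subset (Set.union_subset hX₁ hX₃) hXₙ)] at h
  have hcard : (Icc 3 n).card = (Icc 4 n).card + 1 := by
    simp only [Nat.card_Icc]; omega
  rw [hcard] at h
  linarith

end Matroid

/-- The Kinser class `K n` is minor-closed. -/
theorem Matroid.memKinserClass_of_isMinorOf {α : Type*} {n : ℕ} (hn : 4 ≤ n)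
    (M N : Matroid α) [M.Finite] (hM : M.MemKinserClass n) (hNM : N.IsMinorOf M) :
    N.MemKinserClass n := by
  obtain ⟨C, D, hC, -, -, rfl⟩ := hNM
  intro X hX
  have hXC : ∀ i ∈ Icc 1 n, X i ∪ C ⊆ M.E := fun i hi =>
    Set.union_subset (fun _ hx => (hX i hi hx).1.1) hC
  exact (hM _ hXC).of_union (by omega) hX fun _ => rnk_union_eq_rnk_minor_add
end

section
/- Let M be a finite matroid, n ≥ 4 an integer, and suppose X_1, …, X_n is a bad family for the n-th Kinser inequality in M, i.e. a family of subsets of E(M) violating the inequality. Then there exists a bad family I_1, …, I_n for the n-th Kinser inequality in M in which each set I_j is independent in M; indeed, one may take each I_j to be a maximal independent subset (basis) of X_j. -/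
open Finset

universe u v

/-!
The rank of a set depends only on its closure, and the closure of a union depends only on the
closures of its parts. Replacing each `X i` by a basis of it preserves closures, hence every rank
occurring in the Kinser inequality, so the family of bases is bad exactly when `X` is.
-/

namespace Matroid

variable {α : Type*} {M : Matroid α}

lemma setOf_ncard_indep_subset_eq (M : Matroid α) (X : Set α) :
    {n : ℕ | ∃ I, M.Indep I ∧ I ⊆ X ∧ I.ncard = n} = {n : ℕ | (n : ℕ∞) ≤ M.eRk X} := by
  ext n
  simp only [Set.mem_ofPred_eq, le_eRk_iff]
  constructor
  · rintro ⟨I, hI, hIX, rfl⟩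
    obtain hfin | hinf := I.finite_or_infinite
    · exact ⟨I, hIX, hI, hfin.cast_ncard_eq.symm⟩
    · exact ⟨∅, Set.empty_subset X, M.empty_indep, by simp [hinf.ncard]⟩
  · rintro ⟨I, hIX, hI, hcard⟩
    exact ⟨I, hI, hIX, by rw [Set.ncard_def, hcard, ENat.toNat_natCast]⟩

/-- Infinite independent sets have `ncard = 0`, so on a set of infinite rank `rnk` takes the
junk value `sSup univ = 0`, matching `ENat.toNat ⊤ = 0`. -/
lemma rnk_eq_toNat_eRk (M : Matroid α) (X : Set α) : M.rnk X = (M.eRk X).toNat := by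
  rw [rnk, setOf_ncard_indep_subset_eq]
  cases M.eRk X with
  | top => simp
  | coe k => simpa [← Set.Iic_def] using csSup_Iic (a := k)

lemma rnk_eq_of_closure_eq {X Y : Set α} (h : M.closure X = M.closure Y) : M.rnk X = M.rnk Y := by
  rw [rnk_eq_toNat_eRk, rnk_eq_toNat_eRk, ← eRk_closure_eq, h, eRk_closure_eq]

lemma kinserIneq_congr {n : ℕ} {X Y : ℕ → Set α} (h : ∀ i, M.closure (X i) = M.closure (Y i)) :
    M.KinserIneq n X ↔ M.KinserIneq n Y := by
  have h₂ (i j : ℕ) : M.closure (X i ∪ X j) = M.closure (Y i ∪ Y j) :=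
    (M.closure_union_congr_left (h i)).trans (M.closure_union_congr_right (h j))
  have h₃ (i j k : ℕ) : M.closure (X i ∪ X j ∪ X k) = M.closure (Y i ∪ Y j ∪ Y k) :=
    (M.closure_union_congr_left (h₂ i j)).trans (M.closure_union_congr_right (h k))
  have r₁ (i : ℕ) := rnk_eq_of_closure_eq (h i)
  have r₂ (i j : ℕ) := rnk_eq_of_closure_eq (h₂ i j)
  have r₃ (i j k : ℕ) := rnk_eq_of_closure_eq (h₃ i j k)
  simp only [KinserIneq, r₁, r₂, r₃]

end Matroid

theorem Matroid.exists_indep_bad_family_general {α : Type*} (M : Matroid α) {n : ℕ}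
    (X : ℕ → Set α) (hX : ∀ i ∈ Finset.Icc 1 n, X i ⊆ M.E)
    (hbad : ¬ M.KinserIneq n X) :
    ∃ I : ℕ → Set α, (∀ i ∈ Finset.Icc 1 n, M.IsBasis (I i) (X i)) ∧
      (∀ i ∈ Finset.Icc 1 n, M.Indep (I i)) ∧ ¬ M.KinserIneq n I := by
  choose I hI using fun i ↦ M.exists_isBasis' (X i)
  have hbasis (i : ℕ) (hi : i ∈ Finset.Icc 1 n) : M.IsBasis (I i) (X i) := (hI i).isBasis (hX i hi)
  refine ⟨I, hbasis, fun i hi ↦ (hbasis i hi).indep, ?_⟩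
  rwa [kinserIneq_congr fun i ↦ (hI i).closure_eq_closure]

/-- A bad family for the `n`-th Kinser inequality can be replaced by a bad family of
independent sets; indeed one may take a basis of each set of the family. -/
theorem Matroid.exists_indep_bad_family {α : Type*} (M : Matroid α) [M.Finite] {n : ℕ}
    (hn : 4 ≤ n) (X : ℕ → Set α) (hX : ∀ i ∈ Finset.Icc 1 n, X i ⊆ M.E)
    (hbad : ¬ M.KinserIneq n X) :
    ∃ I : ℕ → Set α, (∀ i ∈ Finset.Icc 1 n, M.IsBasis (I i) (X i)) ∧
      (∀ i ∈ Finset.Icc 1 n, M.Indep (I i)) ∧ ¬ M.KinserIneq n I :=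
  Matroid.exists_indep_bad_family_general M X hX hbad
end

section
/- Let M be a finite matroid, n ≥ 4 an integer, and suppose X_1, …, X_n is a bad family for the n-th Kinser inequality in M, i.e. a family of subsets of E(M) violating the inequality. Then cl(X_1), …, cl(X_n) is also a bad family for the n-th Kinser inequality in M; in particular there exists a bad family in which every set is a flat of M. -/
open Finset

universe u v

/-! Every term of the Kinser inequality is the rank of a union of members of the family.
The rank of a set depends only on its closure, and `cl (A ∪ B) = cl (cl A ∪ cl B)`, so
replacing each member by its closure changes no term. -/

namespace Matroid

variable {α : Type*} {M : Matroid α}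

lemma rnk_eq_eRk [M.Finite] (X : Set α) : (M.rnk X : ℕ∞) = M.eRk X := by
  have hcast {J : Set α} (hJ : M.Indep J) : (J.ncard : ℕ∞) = J.encard :=
    (M.set_finite J hJ.subset_ground).cast_ncard_eq
  obtain ⟨I, hI⟩ := M.exists_isBasis' X
  have hmax : IsGreatest {n : ℕ | ∃ J, M.Indep J ∧ J ⊆ X ∧ J.ncard = n} I.ncard := by
    refine ⟨⟨I, hI.indep, hI.subset, rfl⟩, ?_⟩
    rintro _ ⟨J, hJ, hJX, rfl⟩
    have hle := hJ.encard_le_eRk_of_subset hJX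
    rw [← hI.encard_eq_eRk, ← hcast hJ, ← hcast hI.indep] at hle
    exact_mod_cast hle
  rw [rnk, hmax.csSup_eq, hcast hI.indep, hI.encard_eq_eRk]

lemma rnk_closure_congr [M.Finite] {X Y : Set α} (h : M.closure X = M.closure Y) :
    M.rnk X = M.rnk Y := by
  apply Nat.cast_injective (R := ℕ∞)
  rw [rnk_eq_eRk, rnk_eq_eRk, ← eRk_closure_eq, h, eRk_closure_eq]

lemma rnk_closure_eq [M.Finite] (X : Set α) : M.rnk (M.closure X) = M.rnk X :=
  rnk_closure_congr (closure_closure M X)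

lemma rnk_union_closure_eq [M.Finite] (X Y : Set α) :
    M.rnk (M.closure X ∪ M.closure Y) = M.rnk (X ∪ Y) :=
  rnk_closure_congr (by simp)

lemma rnk_union_union_closure_eq [M.Finite] (X Y Z : Set α) :
    M.rnk (M.closure X ∪ M.closure Y ∪ M.closure Z) = M.rnk (X ∪ Y ∪ Z) :=
  rnk_closure_congr (by
    rw [closure_union_closure_right_eq, ← closure_union_closure_left_eq,
      closure_closure_union_closure_eq_closure_union, closure_union_closure_left_eq])

end Matroid

theorem Matroid.closure_bad_family_general {α : Type*} (M : Matroid α) [M.Finite] {n : ℕ}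
    (X : ℕ → Set α) (hbad : ¬ M.KinserIneq n X) :
    (∀ i, M.IsFlat (M.closure (X i))) ∧ ¬ M.KinserIneq n (fun i => M.closure (X i)) := by
  refine ⟨fun i => M.isFlat_closure (X i), fun h => hbad ?_⟩
  simpa only [KinserIneq, rnk_closure_eq, rnk_union_closure_eq, rnk_union_union_closure_eq]
    using h

/-- If `X 1, …, X n` is a bad family for the `n`-th Kinser inequality, then so is the
family of closures `cl (X 1), …, cl (X n)`; in particular there is a bad family in which
every set is a flat. -/
theorem Matroid.closure_bad_family {α : Type*} (M : Matroid α) [M.Finite] {n : ℕ}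
    (hn : 4 ≤ n) (X : ℕ → Set α) (hX : ∀ i ∈ Finset.Icc 1 n, X i ⊆ M.E)
    (hbad : ¬ M.KinserIneq n X) :
    (∀ i, M.IsFlat (M.closure (X i))) ∧ ¬ M.KinserIneq n (fun i => M.closure (X i)) :=
  Matroid.closure_bad_family_general M X hbad
end

section
/- Let n ≥ 4 be an integer and let M be a finite matroid satisfying the (n+1)-th Kinser inequality for every family of n+1 subsets of its ground set. Then M satisfies the n-th Kinser inequality for every family of n subsets of its ground set. In other words, K_{n+1} ⊆ K_n. -/
open Finset

universe u v

/-- `K (n+1) ⊆ K n` : a finite matroid satisfying the `(n+1)`-th Kinser inequality for all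
families also satisfies the `n`-th Kinser inequality for all families. -/
theorem Matroid.memKinserClass_of_memKinserClass_succ {α : Type*} {n : ℕ} (hn : 4 ≤ n)
    (M : Matroid α) [M.Finite] (hM : M.MemKinserClass (n + 1)) :
    M.MemKinserClass n := by
  intro X hX
  have hY : ∀ i ∈ Finset.Icc 1 (n + 1), (fun i => X (min i n)) i ⊆ M.E := by
    intro i hi
    simp only [Finset.mem_Icc] at hi
    exact hX _ (Finset.mem_Icc.2 (by omega))
  have h := hM (fun i => X (min i n)) hY
  unfold KinserIneq at h ⊢
  simp only at h
  rw [Finset.sum_Icc_succ_top (by omega : 3 ≤ n + 1),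
      Finset.sum_Icc_succ_top (by omega : 4 ≤ n + 1),
      Finset.sum_Icc_succ_top (by omega : 3 ≤ n + 1),
      Finset.sum_Icc_succ_top (by omega : 4 ≤ n + 1)] at h
  have e1 : ∑ i ∈ Finset.Icc 3 n, M.rnk (X (min i n)) = ∑ i ∈ Finset.Icc 3 n, M.rnk (X i) := by
    refine Finset.sum_congr rfl fun i hi => ?_
    simp only [Finset.mem_Icc] at hi
    rw [min_eq_left hi.2]
  have e2 : ∑ i ∈ Finset.Icc 4 n, M.rnk (X (min 2 n) ∪ X (min (i - 1) n) ∪ X (min i n))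
      = ∑ i ∈ Finset.Icc 4 n, M.rnk (X 2 ∪ X (i - 1) ∪ X i) := by
    refine Finset.sum_congr rfl fun i hi => ?_
    simp only [Finset.mem_Icc] at hi
    rw [min_eq_left hi.2, min_eq_left (by omega : i - 1 ≤ n), min_eq_left (by omega : 2 ≤ n)]
  have e3 : ∑ i ∈ Finset.Icc 3 n, M.rnk (X (min 2 n) ∪ X (min i n))
      = ∑ i ∈ Finset.Icc 3 n, M.rnk (X 2 ∪ X i) := by
    refine Finset.sum_congr rfl fun i hi => ?_
    simp only [Finset.mem_Icc] at hi
    rw [min_eq_left hi.2, min_eq_left (by omega : 2 ≤ n)]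
  have e4 : ∑ i ∈ Finset.Icc 4 n, M.rnk (X (min (i - 1) n) ∪ X (min i n))
      = ∑ i ∈ Finset.Icc 4 n, M.rnk (X (i - 1) ∪ X i) := by
    refine Finset.sum_congr rfl fun i hi => ?_
    simp only [Finset.mem_Icc] at hi
    rw [min_eq_left hi.2, min_eq_left (by omega : i - 1 ≤ n)]
  rw [e1, e2, e3, e4, (by omega : min (n + 1) n = n), (by omega : min 1 n = 1),
      (by omega : min 2 n = 2), (by omega : min 3 n = 3),
      (by omega : n + 1 - 1 = n), (by omega : min n n = n)] at h
  have e5 : X 2 ∪ X n ∪ X n = X 2 ∪ X n := by rw [Set.union_assoc, Set.union_self]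
  have e6 : X n ∪ X n = X n := Set.union_self _
  rw [e5, e6] at h
  omega
end

section
/- Let M be a finite matroid that is an excluded minor for the Kinser class K_4, i.e. M violates the 4th Kinser (Ingleton) inequality for some family of four subsets, but every proper minor of M satisfies it for all families. Let X_1, X_2, X_3, X_4 be a bad family in M for the 4th Kinser inequality. Then X_1, X_2, X_3, X_4 is a partition of E(M): the sets are pairwise disjoint and their union is E(M). -/
open Finset

universe u v

/-!
If an element `e` of `E(M)` lies in none of the `Xᵢ`, then `M ＼ e` has the same rank function
on the ten sets of the inequality, so the family stays bad in a proper minor. If `e` lies in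
two of the `Xᵢ`, then the good family `(Xᵢ - e)` of `M ／ e` says that the Ingleton inequality
holds in `M` for the sets `Xᵢ ∪ e`. Passing from `Xᵢ ∪ e` back to `Xᵢ` fixes every term that
already contains `e`, and the remaining terms pair off as `r(T ∪ e) - r(T) ≤ r(S ∪ e) - r(S)`
for `S ⊆ T` (submodularity), with the left side losing at least as much as the right side.
-/

namespace Matroid

open Set

variable {α : Type*} {M : Matroid α} {C D I X Y X₁ X₂ X₃ X₄ : Set α} {e : α}

lemma IsBasis'.rnk_eq [M.RankFinite] (hI : M.IsBasis' I X) : M.rnk X = I.ncard := by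
  refine IsGreatest.csSup_eq ⟨⟨I, hI.indep, hI.subset, rfl⟩, ?_⟩
  rintro n ⟨J, hJ, hJX, rfl⟩
  have hJI : J.encard ≤ I.encard := hI.encard_eq_eRk ▸ hJ.encard_le_eRk_of_subset hJX
  rwa [← hJ.finite.cast_ncard_eq, ← hI.indep.finite.cast_ncard_eq, Nat.cast_le] at hJI

lemma cast_rnk [M.RankFinite] (X : Set α) : (M.rnk X : ℕ∞) = M.eRk X := by
  obtain ⟨I, hI⟩ := M.exists_isBasis' X
  rw [hI.rnk_eq, hI.indep.finite.cast_ncard_eq, hI.encard_eq_eRk]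

lemma rnk_mono [M.RankFinite] (hXY : X ⊆ Y) : M.rnk X ≤ M.rnk Y := by
  have := M.eRk_mono hXY
  rwa [← cast_rnk, ← cast_rnk, Nat.cast_le] at this

lemma rnk_inter_add_rnk_union_le [M.RankFinite] (X Y : Set α) :
    M.rnk (X ∩ Y) + M.rnk (X ∪ Y) ≤ M.rnk X + M.rnk Y := by
  have := M.eRk_inter_add_eRk_union_le X Y
  simp only [← cast_rnk] at this
  exact_mod_cast this

lemma rnk_insert_add_rnk_le [M.RankFinite] (hXY : X ⊆ Y) (e : α) :
    M.rnk (insert e Y) + M.rnk X ≤ M.rnk Y + M.rnk (insert e X) := by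
  have hsub := M.rnk_inter_add_rnk_union_le Y (insert e X)
  rw [union_insert, union_eq_self_of_subset_right hXY] at hsub
  have := M.rnk_mono (subset_inter hXY (subset_insert e X))
  omega

lemma delete_rnk_eq_of_disjoint (M : Matroid α) (hXD : Disjoint X D) :
    (M ＼ D).rnk X = M.rnk X := by
  simp only [rnk, delete_indep_iff]
  congr 1
  ext n
  exact ⟨fun ⟨I, ⟨hI, _⟩, hIX, h⟩ => ⟨I, hI, hIX, h⟩,
    fun ⟨I, hI, hIX, h⟩ => ⟨I, ⟨hI, hXD.mono_left hIX⟩, hIX, h⟩⟩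

lemma contract_eRk_sdiff_add_eRk (M : Matroid α) (C X : Set α) :
    (M ／ C).eRk (X \ C) + M.eRk C = M.eRk (X ∪ C) := by
  obtain ⟨J, hJ⟩ := M.exists_isBasis' C
  obtain ⟨I, hI, hJI⟩ := hJ.indep.subset_isBasis'_of_subset (hJ.subset.trans subset_union_right)
  have hIC : (M ／ C).IsBasis' (I \ C) (X \ C) := by
    simpa using hI.contract_isBasis' hJ (hI.indep.subset (union_subset sdiff_subset hJI))
  have hIJ : I ∩ C = J := (hJ.eq_of_subset_indep (hI.indep.subset inter_subset_left)
    (subset_inter hJI hJ.subset) inter_subset_right).symm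
  rw [← hIC.encard_eq_eRk, ← hJ.encard_eq_eRk, ← hI.encard_eq_eRk, ← hIJ,
    encard_sdiff_add_encard_inter]

lemma contract_rnk_sdiff_add_rnk [M.RankFinite] (C X : Set α) :
    (M ／ C).rnk (X \ C) + M.rnk C = M.rnk (X ∪ C) := by
  have := M.contract_eRk_sdiff_add_eRk C X
  simp only [← cast_rnk] at this
  exact_mod_cast this

lemma isProperMinorOf_delete_singleton (he : e ∈ M.E) : (M ＼ {e}).IsProperMinorOf M :=
  ⟨∅, {e}, empty_subset _, singleton_subset_iff.2 he, empty_disjoint _, by simp,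
    (congrArg (· ＼ {e}) M.contract_empty).symm⟩

lemma isProperMinorOf_contract_singleton (he : e ∈ M.E) : (M ／ {e}).IsProperMinorOf M :=
  ⟨{e}, ∅, singleton_subset_iff.2 he, empty_subset _, disjoint_empty _, by simp,
    (M ／ {e}).delete_empty.symm⟩

lemma kinserIneq_four_iff (M : Matroid α) (X : ℕ → Set α) :
    M.KinserIneq 4 X ↔ M.IngletonIneq (X 1) (X 2) (X 3) (X 4) := by
  simp only [KinserIneq, IngletonIneq, show Finset.Icc 3 4 = {3, 4} by rfl, Finset.Icc_self,
    Finset.sum_pair (show (3 : ℕ) ≠ 4 by decide), Finset.sum_singleton, Nat.reduceSub]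
  omega

lemma ingletonIneq_comm_left :
    M.IngletonIneq X₁ X₂ X₃ X₄ ↔ M.IngletonIneq X₂ X₁ X₃ X₄ := by
  simp only [IngletonIneq, union_comm X₂ X₁]
  omega

lemma ingletonIneq_comm_right :
    M.IngletonIneq X₁ X₂ X₃ X₄ ↔ M.IngletonIneq X₁ X₂ X₄ X₃ := by
  simp only [IngletonIneq, union_comm X₄ X₃, union_right_comm _ X₄ X₃]
  omega

lemma ingletonIneq_delete_iff :
    (M ＼ D).IngletonIneq (X₁ \ D) (X₂ \ D) (X₃ \ D) (X₄ \ D) ↔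
      M.IngletonIneq (X₁ \ D) (X₂ \ D) (X₃ \ D) (X₄ \ D) := by
  simp only [IngletonIneq, ← union_sdiff_distrib,
    M.delete_rnk_eq_of_disjoint disjoint_sdiff_left]

lemma ingletonIneq_contract_iff [M.RankFinite] :
    (M ／ C).IngletonIneq (X₁ \ C) (X₂ \ C) (X₃ \ C) (X₄ \ C) ↔
      M.IngletonIneq (X₁ ∪ C) (X₂ ∪ C) (X₃ ∪ C) (X₄ ∪ C) := by
  simp only [IngletonIneq, ← union_sdiff_distrib, ← union_union_distrib_right]
  have h := M.contract_rnk_sdiff_add_rnk C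
  have := h X₃; have := h X₄; have := h (X₁ ∪ X₂)
  have := h (X₁ ∪ X₃ ∪ X₄); have := h (X₂ ∪ X₃ ∪ X₄)
  have := h (X₁ ∪ X₃); have := h (X₁ ∪ X₄); have := h (X₂ ∪ X₃); have := h (X₂ ∪ X₄)
  have := h (X₃ ∪ X₄)
  omega

section insert

variable [M.RankFinite]

lemma IngletonIneq.of_insert_of_mem₁₂
    (h : M.IngletonIneq (insert e X₁) (insert e X₂) (insert e X₃) (insert e X₄))
    (h₁ : e ∈ X₁) (h₂ : e ∈ X₂) : M.IngletonIneq X₁ X₂ X₃ X₄ := by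
  simp only [IngletonIneq, insert_union, union_insert, insert_idem, mem_union, h₁, h₂, true_or,
    insert_eq_of_mem] at h ⊢
  have := M.rnk_insert_add_rnk_le (subset_union_left : X₃ ⊆ X₃ ∪ X₄) e
  have := M.rnk_mono (subset_insert e X₄)
  omega

lemma IngletonIneq.of_insert_of_mem₃₄
    (h : M.IngletonIneq (insert e X₁) (insert e X₂) (insert e X₃) (insert e X₄))
    (h₃ : e ∈ X₃) (h₄ : e ∈ X₄) : M.IngletonIneq X₁ X₂ X₃ X₄ := by
  simp only [IngletonIneq, insert_union, union_insert, insert_idem, mem_union, h₃, h₄, or_true,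
    insert_eq_of_mem] at h ⊢
  have := M.rnk_mono (subset_insert e (X₁ ∪ X₂))
  omega

lemma IngletonIneq.of_insert_of_mem₁₃
    (h : M.IngletonIneq (insert e X₁) (insert e X₂) (insert e X₃) (insert e X₄))
    (h₁ : e ∈ X₁) (h₃ : e ∈ X₃) : M.IngletonIneq X₁ X₂ X₃ X₄ := by
  simp only [IngletonIneq, insert_union, union_insert, insert_idem, mem_union, h₁, h₃, true_or,
    or_true, insert_eq_of_mem] at h ⊢
  have := M.rnk_insert_add_rnk_le (subset_union_right : X₄ ⊆ X₂ ∪ X₄) e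
  have := M.rnk_mono (subset_insert e (X₁ ∪ X₂))
  omega

lemma IngletonIneq.of_insert_of_mem_union_of_mem_union
    (h : M.IngletonIneq (insert e X₁) (insert e X₂) (insert e X₃) (insert e X₄))
    (h₁₂ : e ∈ X₁ ∪ X₂) (h₃₄ : e ∈ X₃ ∪ X₄) : M.IngletonIneq X₁ X₂ X₃ X₄ := by
  rcases h₁₂ with h₁ | h₂ <;> rcases h₃₄ with h₃ | h₄
  · exact h.of_insert_of_mem₁₃ h₁ h₃
  · exact ingletonIneq_comm_right.2 ((ingletonIneq_comm_right.1 h).of_insert_of_mem₁₃ h₁ h₄)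
  · exact ingletonIneq_comm_left.2 ((ingletonIneq_comm_left.1 h).of_insert_of_mem₁₃ h₂ h₃)
  · exact ingletonIneq_comm_left.2 <| ingletonIneq_comm_right.2 <|
      (ingletonIneq_comm_right.1 (ingletonIneq_comm_left.1 h)).of_insert_of_mem₁₃ h₂ h₄

lemma IngletonIneq.of_insert_of_two_mem {X : ℕ → Set α} {i j : ℕ}
    (h : M.IngletonIneq (insert e (X 1)) (insert e (X 2)) (insert e (X 3)) (insert e (X 4)))
    (hi : i ∈ Finset.Icc 1 4) (hj : j ∈ Finset.Icc 1 4) (hij : i ≠ j)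
    (hei : e ∈ X i) (hej : e ∈ X j) : M.IngletonIneq (X 1) (X 2) (X 3) (X 4) := by
  obtain ⟨hi₁, hi₄⟩ := Finset.mem_Icc.1 hi
  obtain ⟨hj₁, hj₄⟩ := Finset.mem_Icc.1 hj
  interval_cases i <;> interval_cases j
  all_goals first
    | exact absurd rfl hij
    | exact h.of_insert_of_mem₁₂ ‹_› ‹_›
    | exact h.of_insert_of_mem₃₄ ‹_› ‹_›
    | exact h.of_insert_of_mem_union_of_mem_union (by simp [hei, hej]) (by simp [hei, hej])

end insert

end Matroid

theorem Matroid.bad_family_partition_of_excludedMinor_general {α : Type*} (M : Matroid α)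
    [M.Finite]
    (hmin : ∀ N : Matroid α, N.IsProperMinorOf M → N.MemKinserClass 4)
    (X : ℕ → Set α) (hX : ∀ i ∈ Finset.Icc 1 4, X i ⊆ M.E)
    (hbad : ¬ M.KinserIneq 4 X) :
    X 1 ∪ X 2 ∪ X 3 ∪ X 4 = M.E ∧
      ∀ i ∈ Finset.Icc 1 4, ∀ j ∈ Finset.Icc 1 4, i ≠ j → Disjoint (X i) (X j) := by
  rw [kinserIneq_four_iff] at hbad
  have hgood : ∀ e, ∀ N : Matroid α, N.IsProperMinorOf M → N.E = M.E \ {e} →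
      N.IngletonIneq (X 1 \ {e}) (X 2 \ {e}) (X 3 \ {e}) (X 4 \ {e}) := fun e N hN hNE =>
    (kinserIneq_four_iff N fun k => X k \ {e}).1 <|
      hmin N hN _ fun i hi => hNE ▸ Set.sdiff_subset_sdiff_left (hX i hi)
  have hsub : X 1 ∪ X 2 ∪ X 3 ∪ X 4 ⊆ M.E := by
    simp only [Set.union_subset_iff]
    exact ⟨⟨⟨hX 1 (by simp), hX 2 (by simp)⟩, hX 3 (by simp)⟩, hX 4 (by simp)⟩
  refine ⟨hsub.antisymm fun e he => by_contra fun heX => hbad ?_,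
    fun i hi j hj hij => Set.disjoint_left.2 fun e hei hej => hbad ?_⟩
  · simp only [Set.mem_union, not_or] at heX
    have hdel := ingletonIneq_delete_iff.1
      (hgood e _ (isProperMinorOf_delete_singleton he) (M.delete_ground _))
    rwa [Set.sdiff_singleton_eq_self heX.1.1.1, Set.sdiff_singleton_eq_self heX.1.1.2,
      Set.sdiff_singleton_eq_self heX.1.2, Set.sdiff_singleton_eq_self heX.2] at hdel
  · have he := hX i hi hei
    have hcon := ingletonIneq_contract_iff.1
      (hgood e _ (isProperMinorOf_contract_singleton he) (M.contract_ground _))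
    simp only [Set.union_singleton] at hcon
    exact hcon.of_insert_of_two_mem hi hj hij hei hej

/-- A bad family for the Ingleton (4th Kinser) inequality in an excluded minor for `K 4`
is a partition of the ground set. -/
theorem Matroid.bad_family_partition_of_excludedMinor {α : Type*} (M : Matroid α)
    [M.Finite] (hM : ¬ M.MemKinserClass 4)
    (hmin : ∀ N : Matroid α, N.IsProperMinorOf M → N.MemKinserClass 4)
    (X : ℕ → Set α) (hX : ∀ i ∈ Finset.Icc 1 4, X i ⊆ M.E)
    (hbad : ¬ M.KinserIneq 4 X) :
    X 1 ∪ X 2 ∪ X 3 ∪ X 4 = M.E ∧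
      ∀ i ∈ Finset.Icc 1 4, ∀ j ∈ Finset.Icc 1 4, i ≠ j → Disjoint (X i) (X j) :=
  Matroid.bad_family_partition_of_excludedMinor_general M hmin X hX hbad
end
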